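/- In the polynomial hyperring over the sign hyperfield S, hypermultiplication is not associative: ((T-1)⊡(T-1))⊡(T+1) = {T³ + aT² + bT + 1 : a,b ∈ S}, whereas (T-1)⊡((T-1)⊡(T+1)) = {T³ + aT² + bT + 1 : a = -1 or b = -1}, and these two sets are distinct. -/

import Mathlib

/-!
Over `S`, `(T - 1) ⊡ (T - 1)` is the single polynomial `T² - T + 1`, and its product with `T + 1`
has middle coefficients `1 ⊞ -1` and `-1 ⊞ 1`, which are both arbitrary. On the other side,
`(T - 1) ⊡ (T + 1) = {T² + cT - 1 : c ∈ S}`, and `(T - 1) ⊡ (T² + cT - 1)` has coefficient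
`-c ⊞ -1` at `T` and `-1 ⊞ c` at `T²`: whatever `c` is, one of them is forced to be `-1`.
So `T³ + T² + T + 1` lies in the first product but not in the second.
-/

/-- Hyperaddition of the sign hyperfield `S = {0, 1, -1}`:
`x ⊞ 0 = {x}`, `1 ⊞ 1 = {1}`, `(-1) ⊞ (-1) = {-1}`, `1 ⊞ (-1) = {0,1,-1}`. -/
def shadd (a b : SignType) : Set SignType :=
  if a = 0 then {b} else if b = 0 then {a} else if a = b then {a} else Set.univ

/-- The hypersum `⊞_{k=0}^n f k` in the sign hyperfield. -/
def ssum (f : ℕ → SignType) : ℕ → Set SignType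
  | 0 => {f 0}
  | n + 1 => ⋃ b ∈ ssum f n, shadd b (f (n + 1))

/-- Polynomials over the sign hyperfield, as coefficient sequences. -/
abbrev SPoly := ℕ → SignType

/-- The hypermultiplication `p ⊡ q` of polynomials over the sign hyperfield:
`p ⊡ q = { Σ e_i T^i : e_i ∈ ⊞_{k+l=i} c_k d_l }`. -/
def pmul (p q : SPoly) : Set SPoly :=
  {e | ∀ i, e i ∈ ssum (fun k => p k * q (i - k)) i}

/-- Hypermultiplication of a set of polynomials by a polynomial on the right. -/
def pmulSetLeft (P : Set SPoly) (q : SPoly) : Set SPoly := ⋃ p ∈ P, pmul p q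

/-- Hypermultiplication of a polynomial by a set of polynomials on the right. -/
def pmulSetRight (p : SPoly) (Q : Set SPoly) : Set SPoly := ⋃ q ∈ Q, pmul p q

/-- The polynomial `T - 1` over `S`. -/
def Tm1 : SPoly := fun i => if i = 0 then -1 else if i = 1 then 1 else 0

/-- The polynomial `T + 1` over `S`. -/
def Tp1 : SPoly := fun i => if i = 0 then 1 else if i = 1 then 1 else 0

def VanishesAbove (p : SPoly) (n : ℕ) : Prop := ∀ k, n < k → p k = 0

lemma vanishesAbove_iff {p : SPoly} {n : ℕ} :
    VanishesAbove p n ↔ ∀ k, n + 1 ≤ k → p k = 0 :=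
  Iff.rfl

@[simp] lemma shadd_zero_left (b : SignType) : shadd 0 b = {b} := by simp [shadd]

@[simp] lemma shadd_zero_right (a : SignType) : shadd a 0 = {a} := by
  by_cases h : a = 0 <;> simp [shadd, h]

@[simp] lemma shadd_self (a : SignType) : shadd a a = {a} := by
  by_cases h : a = 0 <;> simp [shadd, h]

@[simp] lemma shadd_of_ne {a b : SignType} (ha : a ≠ 0) (hb : b ≠ 0) (hab : a ≠ b) :
    shadd a b = Set.univ := by
  simp [shadd, ha, hb, hab]

lemma ssum_eq_singleton_zero {f : ℕ → SignType} {n : ℕ} (h : ∀ k ≤ n, f k = 0) :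
    ssum f n = {0} := by
  induction n with
  | zero => simp [ssum, h 0 le_rfl]
  | succ n ih =>
      rw [ssum, ih fun k hk => h k (hk.trans n.le_succ), h (n + 1) le_rfl]
      simp

lemma mem_pmul_iff_of_vanishesAbove {p q : SPoly} {m n : ℕ} (hp : VanishesAbove p m)
    (hq : VanishesAbove q n) {e : SPoly} :
    e ∈ pmul p q ↔ (∀ i < m + n + 1, e i ∈ ssum (fun k => p k * q (i - k)) i) ∧
      VanishesAbove e (m + n) := by
  have hssum : ∀ i, m + n < i → ssum (fun k => p k * q (i - k)) i = {0} := fun i hi =>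
    ssum_eq_singleton_zero fun k _ => by
      rcases le_or_gt k m with hk | hk
      · rw [hq _ (by omega), mul_zero]
      · rw [hp k hk, zero_mul]
  constructor
  · intro he
    exact ⟨fun i _ => he i, fun i hi => by simpa [hssum i hi] using he i⟩
  · rintro ⟨hlow, hhigh⟩ i
    rcases lt_or_ge (m + n) i with hi | hi
    · rw [hssum i hi, hhigh i hi]; rfl
    · exact hlow i (by omega)

lemma vanishesAbove_Tm1 : VanishesAbove Tm1 1 := fun k hk => by
  simp [Tm1, show k ≠ 0 by omega, show k ≠ 1 by omega]

lemma vanishesAbove_Tp1 : VanishesAbove Tp1 1 := fun k hk => by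
  simp [Tp1, show k ≠ 0 by omega, show k ≠ 1 by omega]

def quadratic (a b c : SignType) : SPoly :=
  fun i => if i = 0 then a else if i = 1 then b else if i = 2 then c else 0

lemma eq_quadratic_iff {e : SPoly} {a b c : SignType} :
    e = quadratic a b c ↔ e 0 = a ∧ e 1 = b ∧ e 2 = c ∧ VanishesAbove e 2 := by
  constructor
  · rintro rfl
    refine ⟨rfl, rfl, rfl, fun k hk => ?_⟩
    simp [quadratic, show k ≠ 0 by omega, show k ≠ 1 by omega, show k ≠ 2 by omega]
  · rintro ⟨h0, h1, h2, hhigh⟩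
    funext i
    match i with
    | 0 => exact h0
    | 1 => exact h1
    | 2 => exact h2
    | i + 3 => exact hhigh (i + 3) (by omega)

lemma vanishesAbove_quadratic (a b c : SignType) : VanishesAbove (quadratic a b c) 2 :=
  (eq_quadratic_iff.1 rfl).2.2.2

lemma pmul_Tm1_Tm1 : pmul Tm1 Tm1 = {quadratic 1 (-1) 1} := by
  ext e
  rw [mem_pmul_iff_of_vanishesAbove vanishesAbove_Tm1 vanishesAbove_Tm1, Set.mem_singleton_iff,
    eq_quadratic_iff]
  simp only [Nat.forall_lt_succ_right, Nat.not_lt_zero]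
  simp [ssum, Tm1, and_assoc]

lemma pmul_Tm1_Tp1 : pmul Tm1 Tp1 = Set.range (quadratic (-1) · 1) := by
  ext e
  rw [mem_pmul_iff_of_vanishesAbove vanishesAbove_Tm1 vanishesAbove_Tp1]
  simp only [Nat.forall_lt_succ_right, Nat.not_lt_zero]
  simp [ssum, Tm1, Tp1, eq_comm (b := e), eq_quadratic_iff, and_assoc]

lemma pmul_quadratic_Tp1 :
    pmul (quadratic 1 (-1) 1) Tp1 =
      {e : SPoly | e 0 = 1 ∧ e 3 = 1 ∧ ∀ i, 4 ≤ i → e i = 0} := by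
  ext e
  rw [mem_pmul_iff_of_vanishesAbove (vanishesAbove_quadratic _ _ _) vanishesAbove_Tp1]
  simp only [Nat.forall_lt_succ_right, Nat.not_lt_zero]
  simp [ssum, quadratic, Tp1, and_assoc, vanishesAbove_iff]

lemma mem_pmul_Tm1_quadratic {e : SPoly} {c : SignType} :
    e ∈ pmul Tm1 (quadratic (-1) c 1) ↔ (e 0 = 1 ∧ e 3 = 1 ∧ ∀ i, 4 ≤ i → e i = 0) ∧
      e 1 ∈ shadd (-c) (-1) ∧ e 2 ∈ shadd (-1) c := by
  rw [mem_pmul_iff_of_vanishesAbove vanishesAbove_Tm1 (vanishesAbove_quadratic _ _ _)]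
  simp only [Nat.forall_lt_succ_right, Nat.not_lt_zero]
  simp [ssum, quadratic, Tm1, vanishesAbove_iff]
  tauto

lemma exists_mem_shadd_neg_and_mem_shadd_iff (x y : SignType) :
    (∃ c, x ∈ shadd (-c) (-1) ∧ y ∈ shadd (-1) c) ↔ y = -1 ∨ x = -1 := by
  constructor
  · rintro ⟨c, hx, hy⟩
    cases c <;> simp_all [shadd]
  · rintro (hy | hx)
    · exact ⟨-1, by simp, by simp [hy]⟩
    · exact ⟨1, by simp [hx], by simp⟩

lemma pmulSetLeft_pmul_Tm1_Tm1_Tp1 :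
    pmulSetLeft (pmul Tm1 Tm1) Tp1 =
      {e : SPoly | e 0 = 1 ∧ e 3 = 1 ∧ ∀ i, 4 ≤ i → e i = 0} := by
  rw [pmulSetLeft, pmul_Tm1_Tm1, Set.biUnion_singleton, pmul_quadratic_Tp1]

lemma pmulSetRight_Tm1_pmul_Tm1_Tp1 :
    pmulSetRight Tm1 (pmul Tm1 Tp1) =
      {e : SPoly | (e 0 = 1 ∧ e 3 = 1 ∧ ∀ i, 4 ≤ i → e i = 0) ∧
        (e 2 = -1 ∨ e 1 = -1)} := by
  ext e
  simp only [pmulSetRight, pmul_Tm1_Tp1, Set.biUnion_range, Set.mem_iUnion,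
    mem_pmul_Tm1_quadratic, exists_and_left, exists_mem_shadd_neg_and_mem_shadd_iff,
    Set.mem_ofPred_eq]

/-- Hypermultiplication of polynomials over the sign hyperfield is not associative:
`((T-1) ⊡ (T-1)) ⊡ (T+1) = {T³ + aT² + bT + 1 : a, b ∈ S}`, while
`(T-1) ⊡ ((T-1) ⊡ (T+1)) = {T³ + aT² + bT + 1 : a = -1 or b = -1}`, and these two sets
are distinct. -/
theorem sign_pmul_not_assoc :
    pmulSetLeft (pmul Tm1 Tm1) Tp1 =
      {e : SPoly | e 0 = 1 ∧ e 3 = 1 ∧ ∀ i, 4 ≤ i → e i = 0} ∧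
    pmulSetRight Tm1 (pmul Tm1 Tp1) =
      {e : SPoly | (e 0 = 1 ∧ e 3 = 1 ∧ ∀ i, 4 ≤ i → e i = 0) ∧
        (e 2 = -1 ∨ e 1 = -1)} ∧
    pmulSetLeft (pmul Tm1 Tm1) Tp1 ≠ pmulSetRight Tm1 (pmul Tm1 Tp1) := by
  refine ⟨pmulSetLeft_pmul_Tm1_Tm1_Tp1, pmulSetRight_Tm1_pmul_Tm1_Tp1, fun h => ?_⟩
  rw [pmulSetLeft_pmul_Tm1_Tm1_Tp1, pmulSetRight_Tm1_pmul_Tm1_Tp1] at h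
  let w : SPoly := fun i => if i ≤ 3 then 1 else 0
  have hw : w ∈ {e : SPoly | e 0 = 1 ∧ e 3 = 1 ∧ ∀ i, 4 ≤ i → e i = 0} :=
    ⟨rfl, rfl, fun i hi => if_neg (by omega)⟩
  rw [h] at hw
  rcases hw.2 with h | h <;> exact absurd h (by decide)
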